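/- Let B be a cocommutative bialgebra over a commutative ring k (τ∘Δ = Δ) and let F = Σ_{n≥0} ħⁿ Fₙ ∈ (B⊗B)[[ħ]] be a formal Drinfel'd twist with F₀ = 1⊗1: F is normalized ((ε⊗id)(F) = 1 = (id⊗ε)(F), coefficientwise) and satisfies the 2-cocycle condition (F⊗1)·((Δ⊗id)(F)) = (1⊗F)·((id⊗Δ)(F)) in (B⊗B⊗B)[[ħ]]. Then the skew-symmetrization of its first-order coefficient, r := τ(F₁) − F₁ ∈ B⊗B, satisfies (Δ⊗id)(r) = r₁₃ + r₂₃ and (id⊗Δ)(r) = r₁₃ + r₁₂, and it satisfies the classical Yang–Baxter equation [r₁₂, r₁₃] + [r₁₂, r₂₃] + [r₁₃, r₂₃] = 0 in B⊗B⊗B, where [·,·] is the commutator of the algebra B⊗B⊗B. -/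

import Mathlib

/-!
Write `F = 1 + ħ f + ħ² g + ⋯`. The `ħ`- and `ħ²`-coefficients of the cocycle identity read
`f₁₂ + (Δ⊗id) f = f₂₃ + (id⊗Δ) f` and
`g₁₂ + f₁₂ (Δ⊗id) f + (Δ⊗id) g = g₂₃ + f₂₃ (id⊗Δ) f + (id⊗Δ) g`.
Cocommutativity makes `(Δ⊗id) x` invariant under the flip of the first two tensor factors and
`(id⊗Δ) x` under the flip of the last two, so the images of these equations under the symmetric
group `S₃` permuting the factors stay within a small family of terms. Combining three images of
the first equation gives `(Δ⊗id) r = r₁₃ + r₂₃` for `r = τ f - f`; the second coproduct formula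
follows by symmetry since `τ r = -r`. In the alternating sum over `S₃` of the second equation
every term linear in `g` cancels, and what remains becomes the classical Yang–Baxter equation
once the coproduct formulas are substituted.
-/

open TensorProduct

noncomputable section

namespace Stmt

variable (R : Type*) [CommRing R] (B : Type*) [Ring B] [Bialgebra R B]

/-- Comultiplication as an algebra homomorphism. -/
def Δ : B →ₐ[R] B ⊗[R] B := Bialgebra.comulAlgHom R B

/-- Counit as an algebra homomorphism. -/
def ε : B →ₐ[R] R := Bialgebra.counitAlgHom R B

/-- Flip of the two tensor factors of `B ⊗ B`. -/
def τ : B ⊗[R] B ≃ₐ[R] B ⊗[R] B := Algebra.TensorProduct.comm R B B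

/-- Leg embedding `x ↦ x₁₂` of `B ⊗ B` into `B ⊗ B ⊗ B`. -/
def ι₁₂ : B ⊗[R] B →ₐ[R] B ⊗[R] (B ⊗[R] B) :=
  Algebra.TensorProduct.map (AlgHom.id R B) Algebra.TensorProduct.includeLeft

/-- Leg embedding `x ↦ x₁₃` of `B ⊗ B` into `B ⊗ B ⊗ B`. -/
def ι₁₃ : B ⊗[R] B →ₐ[R] B ⊗[R] (B ⊗[R] B) :=
  Algebra.TensorProduct.map (AlgHom.id R B) Algebra.TensorProduct.includeRight

/-- Leg embedding `x ↦ x₂₃` of `B ⊗ B` into `B ⊗ B ⊗ B`. -/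
def ι₂₃ : B ⊗[R] B →ₐ[R] B ⊗[R] (B ⊗[R] B) :=
  Algebra.TensorProduct.includeRight

/-- `Δ ⊗ id : B ⊗ B → B ⊗ B ⊗ B` (re-associated). -/
def Δ₁ : B ⊗[R] B →ₐ[R] B ⊗[R] (B ⊗[R] B) :=
  (Algebra.TensorProduct.assoc R R R B B B).toAlgHom.comp
    (Algebra.TensorProduct.map (Δ R B) (AlgHom.id R B))

/-- `id ⊗ Δ : B ⊗ B → B ⊗ B ⊗ B`. -/
def Δ₂ : B ⊗[R] B →ₐ[R] B ⊗[R] (B ⊗[R] B) :=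
  Algebra.TensorProduct.map (AlgHom.id R B) (Δ R B)

/-- `ε ⊗ id : B ⊗ B → B`. -/
def ε₁ : B ⊗[R] B →ₐ[R] B :=
  (Algebra.TensorProduct.lid R B).toAlgHom.comp
    (Algebra.TensorProduct.map (ε R B) (AlgHom.id R B))

/-- `id ⊗ ε : B ⊗ B → B`. -/
def ε₂ : B ⊗[R] B →ₐ[R] B :=
  (Algebra.TensorProduct.rid R R B).toAlgHom.comp
    (Algebra.TensorProduct.map (AlgHom.id R B) (ε R B))

/-- The skew-symmetrization `r := τ(F₁) − F₁` of the first-order coefficient of a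
formal power series `F` with coefficients in `B ⊗ B`. -/
def rOf (F : PowerSeries (B ⊗[R] B)) : B ⊗[R] B :=
  τ R B (PowerSeries.coeff 1 F) - PowerSeries.coeff 1 F

section PowerSeries

variable {A C : Type*} [Ring A] [Ring C]

lemma coeff_one_map_mul_map (φ ψ : A →+* C) {F : PowerSeries A}
    (hF : PowerSeries.constantCoeff F = 1) :
    PowerSeries.coeff 1 (PowerSeries.map φ F * PowerSeries.map ψ F) =
      φ (PowerSeries.coeff 1 F) + ψ (PowerSeries.coeff 1 F) := by
  rw [PowerSeries.coeff_mul, Finset.Nat.sum_antidiagonal_eq_sum_range_succ_mk]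
  simp [Finset.sum_range_succ, hF]
  abel

lemma coeff_two_map_mul_map (φ ψ : A →+* C) {F : PowerSeries A}
    (hF : PowerSeries.constantCoeff F = 1) :
    PowerSeries.coeff 2 (PowerSeries.map φ F * PowerSeries.map ψ F) =
      φ (PowerSeries.coeff 2 F) + φ (PowerSeries.coeff 1 F) * ψ (PowerSeries.coeff 1 F) +
        ψ (PowerSeries.coeff 2 F) := by
  rw [PowerSeries.coeff_mul, Finset.Nat.sum_antidiagonal_eq_sum_range_succ_mk]
  simp [Finset.sum_range_succ, hF]
  abel

end PowerSeries

def flip₁₂ : B ⊗[R] (B ⊗[R] B) ≃ₐ[R] B ⊗[R] (B ⊗[R] B) :=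
  (Algebra.TensorProduct.assoc R R R B B B).symm.trans
    ((Algebra.TensorProduct.congr (τ R B) AlgEquiv.refl).trans
      (Algebra.TensorProduct.assoc R R R B B B))

def flip₂₃ : B ⊗[R] (B ⊗[R] B) ≃ₐ[R] B ⊗[R] (B ⊗[R] B) :=
  Algebra.TensorProduct.congr AlgEquiv.refl (τ R B)

variable {R B}

@[simp] lemma τ_τ (x : B ⊗[R] B) : τ R B (τ R B x) = x :=
  (τ R B).symm_apply_apply x

@[simp] lemma flip₁₂_flip₁₂ (x : B ⊗[R] (B ⊗[R] B)) : flip₁₂ R B (flip₁₂ R B x) = x := by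
  have h : (flip₁₂ R B).toAlgHom.comp (flip₁₂ R B).toAlgHom = AlgHom.id R _ := by
    ext <;> simp [flip₁₂, τ, Algebra.TensorProduct.one_def]
  exact AlgHom.congr_fun h x

@[simp] lemma flip₂₃_flip₂₃ (x : B ⊗[R] (B ⊗[R] B)) : flip₂₃ R B (flip₂₃ R B x) = x := by
  have h : (flip₂₃ R B).toAlgHom.comp (flip₂₃ R B).toAlgHom = AlgHom.id R _ := by
    ext <;> simp [flip₂₃, τ]
  exact AlgHom.congr_fun h x

@[simp] lemma flip₁₂_ι₁₂ (x : B ⊗[R] B) : flip₁₂ R B (ι₁₂ R B x) = ι₁₂ R B (τ R B x) := by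
  have h : (flip₁₂ R B).toAlgHom.comp (ι₁₂ R B) = (ι₁₂ R B).comp (τ R B).toAlgHom := by
    ext <;> simp [flip₁₂, ι₁₂, τ]
  exact AlgHom.congr_fun h x

@[simp] lemma flip₁₂_ι₁₃ (x : B ⊗[R] B) : flip₁₂ R B (ι₁₃ R B x) = ι₂₃ R B x := by
  have h : (flip₁₂ R B).toAlgHom.comp (ι₁₃ R B) = ι₂₃ R B := by
    ext <;> simp [flip₁₂, ι₁₃, ι₂₃, τ]
  exact AlgHom.congr_fun h x

@[simp] lemma flip₁₂_ι₂₃ (x : B ⊗[R] B) : flip₁₂ R B (ι₂₃ R B x) = ι₁₃ R B x := by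
  have h : (flip₁₂ R B).toAlgHom.comp (ι₂₃ R B) = ι₁₃ R B := by
    ext <;> simp [flip₁₂, ι₁₃, ι₂₃, τ, Algebra.TensorProduct.one_def]
  exact AlgHom.congr_fun h x

@[simp] lemma flip₂₃_ι₁₂ (x : B ⊗[R] B) : flip₂₃ R B (ι₁₂ R B x) = ι₁₃ R B x := by
  have h : (flip₂₃ R B).toAlgHom.comp (ι₁₂ R B) = ι₁₃ R B := by
    ext <;> simp [flip₂₃, ι₁₂, ι₁₃, τ, Algebra.TensorProduct.one_def]
  exact AlgHom.congr_fun h x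

@[simp] lemma flip₂₃_ι₁₃ (x : B ⊗[R] B) : flip₂₃ R B (ι₁₃ R B x) = ι₁₂ R B x := by
  have h : (flip₂₃ R B).toAlgHom.comp (ι₁₃ R B) = ι₁₂ R B := by
    ext <;> simp [flip₂₃, ι₁₂, ι₁₃, τ, Algebra.TensorProduct.one_def]
  exact AlgHom.congr_fun h x

@[simp] lemma flip₂₃_ι₂₃ (x : B ⊗[R] B) : flip₂₃ R B (ι₂₃ R B x) = ι₂₃ R B (τ R B x) := by
  have h : (flip₂₃ R B).toAlgHom.comp (ι₂₃ R B) = (ι₂₃ R B).comp (τ R B).toAlgHom := by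
    ext <;> simp [flip₂₃, ι₂₃, τ]
  exact AlgHom.congr_fun h x

lemma flip₁₂_one_tmul (y : B ⊗[R] B) :
    flip₁₂ R B (1 ⊗ₜ y) = flip₂₃ R B (Algebra.TensorProduct.assoc R R R B B B (y ⊗ₜ 1)) := by
  induction y using TensorProduct.induction_on with
  | zero => simp
  | tmul a b => simp [flip₁₂, flip₂₃, τ]
  | add y z hy hz => simp only [tmul_add, add_tmul, map_add, hy, hz]

/-- Together with `flip₁₂_Δ₁` and `flip₂₃_Δ₂` this puts every `S₃`-image of `Δ₁ x` or `Δ₂ x`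
in one of the forms `Δ₁ y`, `Δ₂ y`, `flip₂₃ (Δ₁ y)`. -/
@[simp] lemma flip₁₂_Δ₂ (x : B ⊗[R] B) :
    flip₁₂ R B (Δ₂ R B x) = flip₂₃ R B (Δ₁ R B (τ R B x)) := by
  have h : (flip₁₂ R B).toAlgHom.comp (Δ₂ R B) =
      (flip₂₃ R B).toAlgHom.comp ((Δ₁ R B).comp (τ R B).toAlgHom) := by
    ext b
    · simp [flip₁₂, flip₂₃, Δ₁, Δ₂, τ, Algebra.TensorProduct.one_def]
    · simpa [Δ₁, Δ₂, τ] using flip₁₂_one_tmul (Δ R B b)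
  exact AlgHom.congr_fun h x

@[simp] lemma flip₁₂_flip₂₃_Δ₁ (x : B ⊗[R] B) :
    flip₁₂ R B (flip₂₃ R B (Δ₁ R B x)) = Δ₂ R B (τ R B x) := by
  rw [← flip₁₂_flip₁₂ (Δ₂ R B (τ R B x)), flip₁₂_Δ₂, τ_τ]

lemma Δ₂_eq_of_Δ₁_eq {r : B ⊗[R] B} (hr : τ R B r = -r)
    (h : Δ₁ R B r = ι₁₃ R B r + ι₂₃ R B r) : Δ₂ R B r = ι₁₃ R B r + ι₁₂ R B r := by
  have := congrArg (fun y => flip₁₂ R B (flip₂₃ R B y)) h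
  simp only [flip₁₂_flip₂₃_Δ₁, hr, map_add, map_neg, flip₂₃_ι₁₃, flip₂₃_ι₂₃, flip₁₂_ι₁₂,
    flip₁₂_ι₂₃] at this
  linear_combination (norm := noncomm_ring) -this

lemma classicalYangBaxter_of_alternation {r : B ⊗[R] B} (hr : τ R B r = -r)
    (h : Δ₁ R B r = ι₁₃ R B r + ι₂₃ R B r)
    (halt : ι₁₂ R B r * Δ₁ R B r - ι₁₃ R B r * flip₂₃ R B (Δ₁ R B r) -
      ι₂₃ R B r * Δ₂ R B r = 0) :
    (ι₁₂ R B r * ι₁₃ R B r - ι₁₃ R B r * ι₁₂ R B r) +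
      (ι₁₂ R B r * ι₂₃ R B r - ι₂₃ R B r * ι₁₂ R B r) +
      (ι₁₃ R B r * ι₂₃ R B r - ι₂₃ R B r * ι₁₃ R B r) = 0 := by
  have hskew : ι₂₃ R B (τ R B r) + ι₂₃ R B r = 0 := by
    rw [← map_add, hr, neg_add_cancel, map_zero]
  rw [Δ₂_eq_of_Δ₁_eq hr h, h, map_add, flip₂₃_ι₁₃, flip₂₃_ι₂₃] at halt
  linear_combination (norm := noncomm_ring) halt + ι₁₃ R B r * hskew

section Cocommutative

variable [Coalgebra.IsCocomm R B]

lemma τ_comp_Δ : (τ R B).toAlgHom.comp (Δ R B) = Δ R B :=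
  AlgHom.ext fun b => Coalgebra.comm_comul R b

@[simp] lemma flip₁₂_Δ₁ (x : B ⊗[R] B) : flip₁₂ R B (Δ₁ R B x) = Δ₁ R B x := by
  simp only [flip₁₂, Δ₁, AlgEquiv.trans_apply, AlgHom.comp_apply, AlgEquiv.coe_toAlgHom,
    AlgEquiv.symm_apply_apply, Algebra.TensorProduct.congr_apply]
  rw [← AlgHom.comp_apply, ← Algebra.TensorProduct.map_comp, τ_comp_Δ]
  rfl

@[simp] lemma flip₂₃_Δ₂ (x : B ⊗[R] B) : flip₂₃ R B (Δ₂ R B x) = Δ₂ R B x := by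
  simp only [flip₂₃, Δ₂, Algebra.TensorProduct.congr_apply]
  rw [← AlgHom.comp_apply, ← Algebra.TensorProduct.map_comp, τ_comp_Δ]
  rfl

lemma Δ₁_eq_of_cocycle_one {f : B ⊗[R] B}
    (h₁ : ι₁₂ R B f + Δ₁ R B f = ι₂₃ R B f + Δ₂ R B f) :
    Δ₁ R B (τ R B f - f) = ι₁₃ R B (τ R B f - f) + ι₂₃ R B (τ R B f - f) := by
  have h₂₃ := congrArg (flip₂₃ R B) h₁
  have h₂₃₁₂ := congrArg (fun y => flip₂₃ R B (flip₁₂ R B y)) h₁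
  simp only [map_add, flip₂₃_ι₁₂, flip₂₃_ι₂₃, flip₂₃_Δ₂, flip₁₂_ι₁₂, flip₁₂_Δ₁, flip₁₂_ι₂₃,
    flip₁₂_Δ₂, flip₂₃_ι₁₃, flip₂₃_flip₂₃] at h₂₃ h₂₃₁₂
  simp only [map_sub]
  linear_combination (norm := noncomm_ring) h₂₃ - h₂₃₁₂ - h₁

/-- The alternating sum over `S₃` of the images of the `ħ²`-coefficient of the cocycle identity:
the terms in `g` cancel, and the rest factors through `r = τ f - f`. -/
lemma alternation_of_cocycle_two {f g : B ⊗[R] B}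
    (h₂ : ι₁₂ R B g + ι₁₂ R B f * Δ₁ R B f + Δ₁ R B g =
      ι₂₃ R B g + ι₂₃ R B f * Δ₂ R B f + Δ₂ R B g) :
    ι₁₂ R B (τ R B f - f) * Δ₁ R B (τ R B f - f) -
      ι₁₃ R B (τ R B f - f) * flip₂₃ R B (Δ₁ R B (τ R B f - f)) -
      ι₂₃ R B (τ R B f - f) * Δ₂ R B (τ R B f - f) = 0 := by
  have h₁₂ := congrArg (flip₁₂ R B) h₂
  have h₂₃ := congrArg (flip₂₃ R B) h₂
  have h₁₂₂₃ := congrArg (fun y => flip₁₂ R B (flip₂₃ R B y)) h₂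
  have h₂₃₁₂ := congrArg (fun y => flip₂₃ R B (flip₁₂ R B y)) h₂
  have h₁₂₂₃₁₂ := congrArg (fun y => flip₁₂ R B (flip₂₃ R B (flip₁₂ R B y))) h₂
  simp only [map_add, map_mul, flip₁₂_ι₁₂, flip₁₂_ι₁₃, flip₁₂_ι₂₃, flip₂₃_ι₁₂, flip₂₃_ι₁₃,
    flip₂₃_ι₂₃, flip₁₂_Δ₁, flip₁₂_Δ₂, flip₂₃_Δ₂, flip₁₂_flip₂₃_Δ₁, flip₂₃_flip₂₃]
    at h₁₂ h₂₃ h₁₂₂₃ h₂₃₁₂ h₁₂₂₃₁₂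
  simp only [map_sub]
  linear_combination (norm := skip) h₂ - h₁₂ - h₂₃ + h₁₂₂₃ + h₂₃₁₂ - h₁₂₂₃₁₂
  simp only [mul_sub, sub_mul]
  abel

end Cocommutative

theorem first_order_of_twist_general
    (hcc : ∀ b : B, τ R B (Coalgebra.comul (R := R) b) = Coalgebra.comul (R := R) b)
    (F : PowerSeries (B ⊗[R] B))
    (h0 : PowerSeries.constantCoeff F = 1)
    (hcoc : PowerSeries.map (ι₁₂ R B).toRingHom F *
        PowerSeries.map (Δ₁ R B).toRingHom F =
      PowerSeries.map (ι₂₃ R B).toRingHom F *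
        PowerSeries.map (Δ₂ R B).toRingHom F) :
    Δ₁ R B (rOf R B F) = ι₁₃ R B (rOf R B F) + ι₂₃ R B (rOf R B F) ∧
    Δ₂ R B (rOf R B F) = ι₁₃ R B (rOf R B F) + ι₁₂ R B (rOf R B F) ∧
    (ι₁₂ R B (rOf R B F) * ι₁₃ R B (rOf R B F) -
        ι₁₃ R B (rOf R B F) * ι₁₂ R B (rOf R B F)) +
      (ι₁₂ R B (rOf R B F) * ι₂₃ R B (rOf R B F) -
        ι₂₃ R B (rOf R B F) * ι₁₂ R B (rOf R B F)) +
      (ι₁₃ R B (rOf R B F) * ι₂₃ R B (rOf R B F) -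
        ι₂₃ R B (rOf R B F) * ι₁₃ R B (rOf R B F)) = 0 := by
  have : Coalgebra.IsCocomm R B := ⟨LinearMap.ext hcc⟩
  have h₁ := congrArg (PowerSeries.coeff 1) hcoc
  have h₂ := congrArg (PowerSeries.coeff 2) hcoc
  simp only [coeff_one_map_mul_map _ _ h0, coeff_two_map_mul_map _ _ h0] at h₁ h₂
  have hr : τ R B (rOf R B F) = -rOf R B F := by simp [rOf]
  have hΔ₁ : Δ₁ R B (rOf R B F) = ι₁₃ R B (rOf R B F) + ι₂₃ R B (rOf R B F) :=
    Δ₁_eq_of_cocycle_one h₁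
  exact ⟨hΔ₁, Δ₂_eq_of_Δ₁_eq hr hΔ₁,
    classicalYangBaxter_of_alternation hr hΔ₁ (alternation_of_cocycle_two h₂)⟩

/-- **Semiclassical limit of a formal Drinfel'd twist.**  If `B` is cocommutative
and `F` is a formal Drinfel'd twist with constant coefficient `1⊗1`, then
`r = τ(F₁) − F₁` satisfies `(Δ⊗id)(r) = r₁₃ + r₂₃`, `(id⊗Δ)(r) = r₁₃ + r₁₂` and the
classical Yang–Baxter equation. -/
theorem first_order_of_twist
    (hcc : ∀ b : B, τ R B (Coalgebra.comul (R := R) b) = Coalgebra.comul (R := R) b)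
    (F : PowerSeries (B ⊗[R] B))
    (h0 : PowerSeries.constantCoeff F = 1)
    (hnorm₁ : PowerSeries.map (ε₁ R B).toRingHom F = 1)
    (hnorm₂ : PowerSeries.map (ε₂ R B).toRingHom F = 1)
    (hcoc : PowerSeries.map (ι₁₂ R B).toRingHom F *
        PowerSeries.map (Δ₁ R B).toRingHom F =
      PowerSeries.map (ι₂₃ R B).toRingHom F *
        PowerSeries.map (Δ₂ R B).toRingHom F) :
    Δ₁ R B (rOf R B F) = ι₁₃ R B (rOf R B F) + ι₂₃ R B (rOf R B F) ∧
    Δ₂ R B (rOf R B F) = ι₁₃ R B (rOf R B F) + ι₁₂ R B (rOf R B F) ∧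
    (ι₁₂ R B (rOf R B F) * ι₁₃ R B (rOf R B F) -
        ι₁₃ R B (rOf R B F) * ι₁₂ R B (rOf R B F)) +
      (ι₁₂ R B (rOf R B F) * ι₂₃ R B (rOf R B F) -
        ι₂₃ R B (rOf R B F) * ι₁₂ R B (rOf R B F)) +
      (ι₁₃ R B (rOf R B F) * ι₂₃ R B (rOf R B F) -
        ι₂₃ R B (rOf R B F) * ι₁₃ R B (rOf R B F)) = 0 :=
  first_order_of_twist_general hcc F h0 hcoc

end Stmt
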